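/- Let d ≥ 1 be an integer, let 0 < δ ≤ 1/3 and δ ≤ ε ≤ 1. Let Ñ be a finite δ-approximation for B̃_d(ε) with δ·|Ñ| ≥ e. Then Ñ(ε,d) ≤ ln(4·δ·|Ñ|)/δ; that is, there exists a set P ⊆ [0,1]^d of cardinality at most ln(4·δ·|Ñ|)/δ with disp̃(P) ≤ ε. -/

import Mathlib

open MeasureTheory Real Set ProbabilityTheory

noncomputable section

/-- The unit cube `[0,1]^d`. -/
def cube (d : ℕ) : Set (Fin d → ℝ) := Set.univ.pi fun _ => Set.Icc 0 1

/-- Axis-parallel boxes `∏ [aᵢ, bᵢ)` with `0 ≤ aᵢ ≤ bᵢ ≤ 1`. -/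
def IsBox {d : ℕ} (B : Set (Fin d → ℝ)) : Prop :=
  ∃ a b : Fin d → ℝ, (∀ i, 0 ≤ a i ∧ a i ≤ b i ∧ b i ≤ 1) ∧
    B = Set.univ.pi fun i => Set.Ico (a i) (b i)

/-- Periodic axis-parallel boxes on the torus: in each coordinate the factor is
`(aᵢ, bᵢ)` if `aᵢ < bᵢ`, and `[0,1] \ [bᵢ, aᵢ]` if `bᵢ < aᵢ`. -/
def IsPeriodicBox {d : ℕ} (B : Set (Fin d → ℝ)) : Prop :=
  ∃ a b : Fin d → ℝ, a ∈ cube d ∧ b ∈ cube d ∧ (∀ i, a i ≠ b i) ∧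
    B = Set.univ.pi fun i =>
      if a i < b i then Set.Ioo (a i) (b i) else Set.Icc 0 1 \ Set.Icc (b i) (a i)

/-- `d`-dimensional Lebesgue volume, as a real number. -/
def vol {d : ℕ} (B : Set (Fin d → ℝ)) : ℝ := (MeasureTheory.volume B).toReal

/-- Dispersion of a point set: supremum of volumes of boxes avoiding `P`. -/
def disp {d : ℕ} (P : Set (Fin d → ℝ)) : ℝ :=
  sSup {v | ∃ B : Set (Fin d → ℝ), IsBox B ∧ B ∩ P = ∅ ∧ v = vol B}

/-- Periodic (torus) dispersion of a point set. -/
def pdisp {d : ℕ} (P : Set (Fin d → ℝ)) : ℝ :=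
  sSup {v | ∃ B : Set (Fin d → ℝ), IsPeriodicBox B ∧ B ∩ P = ∅ ∧ v = vol B}

/-- Minimal dispersion `disp*(n,d)`. -/
def dispStar (n d : ℕ) : ℝ :=
  sInf {v | ∃ P : Finset (Fin d → ℝ), ↑P ⊆ cube d ∧ P.card = n ∧ v = disp (↑P : Set (Fin d → ℝ))}

/-- Minimal periodic dispersion `disp̃*(n,d)`. -/
def pdispStar (n d : ℕ) : ℝ :=
  sInf {v | ∃ P : Finset (Fin d → ℝ), ↑P ⊆ cube d ∧ P.card = n ∧ v = pdisp (↑P : Set (Fin d → ℝ))}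

/-- Inverse of the minimal dispersion, `N(ε,d)`. -/
def invDisp (ε : ℝ) (d : ℕ) : ℕ := sInf {n : ℕ | 0 < n ∧ dispStar n d ≤ ε}

/-- A `δ`-approximation of the family of boxes of volume at least `ε`. -/
def DeltaApprox {d : ℕ} (δ ε : ℝ) (𝒩 : Set (Set (Fin d → ℝ))) : Prop :=
  (∀ A ∈ 𝒩, IsBox A) ∧
  ∀ B : Set (Fin d → ℝ), IsBox B → ε ≤ vol B → ∃ B₀ ∈ 𝒩, B₀ ⊆ B ∧ δ ≤ vol B₀

/-- A `δ`-approximation of the family of periodic boxes of volume at least `ε`. -/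
def PeriodicDeltaApprox {d : ℕ} (δ ε : ℝ) (𝒩 : Set (Set (Fin d → ℝ))) : Prop :=
  (∀ A ∈ 𝒩, IsPeriodicBox A) ∧
  ∀ B : Set (Fin d → ℝ), IsPeriodicBox B → ε ≤ vol B → ∃ B₀ ∈ 𝒩, B₀ ⊆ B ∧ δ ≤ vol B₀




open scoped Classical ENNReal

lemma cube_measurable (d : ℕ) : MeasurableSet (cube d) :=
  MeasurableSet.pi Set.countable_univ (fun _ _ => measurableSet_Icc)

lemma volume_cube (d : ℕ) : volume (cube d) = 1 := by
  rw [cube, volume_pi_pi]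
  simp [Real.volume_Icc]

lemma periodicBox_measurable {d : ℕ} {B : Set (Fin d → ℝ)} (h : IsPeriodicBox B) :
    MeasurableSet B := by
  obtain ⟨a, b, _, _, _, rfl⟩ := h
  refine MeasurableSet.pi Set.countable_univ fun i _ => ?_
  by_cases hab : a i < b i
  · simp only [hab, if_true]; exact measurableSet_Ioo
  · simp only [hab, if_false]; exact measurableSet_Icc.diff measurableSet_Icc

lemma periodicBox_subset_cube {d : ℕ} {B : Set (Fin d → ℝ)} (h : IsPeriodicBox B) :
    B ⊆ cube d := by
  obtain ⟨a, b, ha, hb, _, rfl⟩ := h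
  refine Set.pi_mono fun i _ => ?_
  by_cases hab : a i < b i
  · simp only [hab, if_true]
    exact Set.Ioo_subset_Icc_self.trans
      (Set.Icc_subset_Icc (ha i (Set.mem_univ i)).1 (hb i (Set.mem_univ i)).2)
  · simp only [hab, if_false]
    exact Set.diff_subset

lemma pigeon {d : ℕ} (S : Finset (Set (Fin d → ℝ)))
    (hmeas : ∀ A ∈ S, MeasurableSet A) (hsub : ∀ A ∈ S, A ⊆ cube d)
    (k : ℕ) (hk : (k : ℝ≥0∞) < ∑ A ∈ S, volume A) :
    ∃ x ∈ cube d, k < (S.filter (fun A => x ∈ A)).card := by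
  by_contra hcon
  push_neg at hcon
  have key : ∑ A ∈ S, volume A ≤ k := by
    have h1 : ∑ A ∈ S, volume A
        = ∫⁻ x, ∑ A ∈ S, A.indicator (fun _ => (1:ℝ≥0∞)) x := by
      rw [lintegral_finset_sum _ (fun A hA => (measurable_const.indicator (hmeas A hA)))]
      refine Finset.sum_congr rfl fun A hA => ?_
      rw [lintegral_indicator_const (hmeas A hA)]
      simp
    rw [h1]
    have h2 : ∫⁻ x, (cube d).indicator (fun _ => (k:ℝ≥0∞)) x = k := by
      rw [lintegral_indicator_const (cube_measurable d), volume_cube, mul_one]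
    rw [← h2]
    refine lintegral_mono fun x => ?_
    by_cases hx : x ∈ cube d
    · have : ∑ A ∈ S, A.indicator (fun _ => (1:ℝ≥0∞)) x
          = ((S.filter (fun A => x ∈ A)).card : ℝ≥0∞) := by
        rw [← Finset.sum_boole]
        refine Finset.sum_congr rfl fun A _ => ?_
        by_cases h : x ∈ A <;> simp [Set.indicator, h]
      rw [this, Set.indicator_of_mem hx]
      exact (Nat.cast_le (α := ℝ≥0∞)).mpr (hcon x hx)
    · have : ∑ A ∈ S, A.indicator (fun _ => (1:ℝ≥0∞)) x = 0 := by
        refine Finset.sum_eq_zero fun A hA => ?_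
        exact Set.indicator_of_notMem (fun h => hx (hsub A hA h)) _
      rw [this]
      exact zero_le
  exact absurd hk (not_lt.mpr key)

lemma greedy {d : ℕ} (δ : ℝ) (hδ0 : 0 < δ) (hδ1 : δ ≤ 1) :
    ∀ m : ℕ, ∀ S : Finset (Set (Fin d → ℝ)),
    (∀ A ∈ S, MeasurableSet A ∧ A ⊆ cube d ∧ ENNReal.ofReal δ ≤ volume A) →
    ∃ P : Finset (Fin d → ℝ), ↑P ⊆ cube d ∧ P.card ≤ m ∧
      (((S.filter (fun A => ∀ x ∈ P, x ∉ A)).card : ℝ) ≤ (1-δ)^m * S.card) := by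
  intro m
  induction m with
  | zero =>
    intro S hS
    refine ⟨∅, by simp, le_refl _, ?_⟩
    simp only [pow_zero, one_mul]
    exact_mod_cast Finset.card_le_card (Finset.filter_subset _ _)
  | succ m ih =>
    intro S hS
    rcases S.eq_empty_or_nonempty with rfl | hne
    · exact ⟨∅, by simp, by simp, by simp⟩
    · have hn : (0:ℝ) < S.card := by exact_mod_cast Finset.card_pos.mpr hne
      have hδn : (0:ℝ) < δ * S.card := mul_pos hδ0 hn
      set k : ℕ := ⌈δ * S.card⌉₊ - 1 with hk
      have hceil1 : 1 ≤ ⌈δ * (S.card:ℝ)⌉₊ := Nat.one_le_ceil_iff.mpr hδn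
      have hklt : (k:ℝ) < δ * S.card := by
        have h1 : (⌈δ * (S.card:ℝ)⌉₊ : ℝ) < δ * S.card + 1 :=
          Nat.ceil_lt_add_one hδn.le
        have h2 : (k:ℝ) = (⌈δ * (S.card:ℝ)⌉₊ : ℝ) - 1 := by
          rw [hk]; push_cast [hceil1]; ring
        linarith
      have hsum : ENNReal.ofReal (δ * S.card) ≤ ∑ A ∈ S, volume A := by
        calc ENNReal.ofReal (δ * S.card) = S.card • ENNReal.ofReal δ := by
              rw [mul_comm, ENNReal.ofReal_mul (by positivity), nsmul_eq_mul]
              simp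
          _ ≤ ∑ A ∈ S, volume A :=
              Finset.card_nsmul_le_sum S _ _ (fun A hA => (hS A hA).2.2)
      have hklt' : (k : ℝ≥0∞) < ∑ A ∈ S, volume A := by
        refine lt_of_lt_of_le ?_ hsum
        rw [← ENNReal.ofReal_natCast k]
        exact ENNReal.ofReal_lt_ofReal_iff hδn |>.mpr hklt
      obtain ⟨x, hxcube, hxcount⟩ := pigeon S (fun A hA => (hS A hA).1)
        (fun A hA => (hS A hA).2.1) k hklt'
      set S' : Finset (Set (Fin d → ℝ)) := S.filter (fun A => x ∉ A) with hS'
      have hS'card : (S'.card : ℝ) ≤ (1 - δ) * S.card := by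
        have hsplit : S'.card + (S.filter (fun A => x ∈ A)).card = S.card := by
          rw [hS', add_comm]
          exact Finset.card_filter_add_card_filter_not _
        have hcount : (δ * S.card : ℝ) ≤ (S.filter (fun A => x ∈ A)).card := by
          have h3 : ⌈δ * (S.card:ℝ)⌉₊ ≤ (S.filter (fun A => x ∈ A)).card := by
            have : k + 1 ≤ (S.filter (fun A => x ∈ A)).card := hxcount
            omega
          calc (δ * S.card : ℝ) ≤ ⌈δ * (S.card:ℝ)⌉₊ := Nat.le_ceil _
            _ ≤ _ := by exact_mod_cast h3
        have heq : (S'.card : ℝ) = S.card - (S.filter (fun A => x ∈ A)).card := by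
          have := hsplit; push_cast [← this]; ring
        rw [heq]; linarith
      obtain ⟨P', hP'cube, hP'card, hP'bound⟩ := ih S'
        (fun A hA => hS A (Finset.mem_filter.mp hA).1)
      refine ⟨insert x P', ?_, ?_, ?_⟩
      · intro y hy
        rcases Finset.mem_insert.mp hy with rfl | hy
        · exact hxcube
        · exact hP'cube hy
      · calc (insert x P').card ≤ P'.card + 1 := Finset.card_insert_le _ _
          _ ≤ m + 1 := by omega
      · have hsub2 : S.filter (fun A => ∀ y ∈ insert x P', y ∉ A)
            ⊆ S'.filter (fun A => ∀ y ∈ P', y ∉ A) := by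
          intro A hA
          rw [Finset.mem_filter] at hA ⊢
          refine ⟨Finset.mem_filter.mpr ⟨hA.1, hA.2 x (Finset.mem_insert_self _ _)⟩,
            fun y hy => hA.2 y (Finset.mem_insert_of_mem hy)⟩
        have h1δ : (0:ℝ) ≤ 1 - δ := by linarith
        calc ((S.filter (fun A => ∀ y ∈ insert x P', y ∉ A)).card : ℝ)
            ≤ (S'.filter (fun A => ∀ y ∈ P', y ∉ A)).card := by
              exact_mod_cast Finset.card_le_card hsub2
          _ ≤ (1-δ)^m * S'.card := hP'bound
          _ ≤ (1-δ)^m * ((1-δ) * S.card) :=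
              mul_le_mul_of_nonneg_left hS'card (pow_nonneg h1δ m)
          _ = (1-δ)^(m+1) * S.card := by ring

/-- New probabilistic lemma, torus case: if `𝒩` is a finite `δ`-approximation for the periodic
boxes of volume `≥ ε` with `δ|𝒩| ≥ e`, then there is a set `P ⊆ [0,1]^d` of cardinality at
most `ln(4δ|𝒩|)/δ` with `disp̃(P) ≤ ε`. -/

theorem piercing_lemma_torus (d : ℕ) (hd : 1 ≤ d) (δ ε : ℝ) (hδ : 0 < δ) (hδ3 : δ ≤ 1 / 3)
    (hδε : δ ≤ ε) (hε : ε ≤ 1) (𝒩 : Set (Set (Fin d → ℝ))) (hfin : 𝒩.Finite)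
    (happ : PeriodicDeltaApprox δ ε 𝒩) (hcard : Real.exp 1 ≤ δ * 𝒩.ncard) :
    ∃ P : Finset (Fin d → ℝ), ↑P ⊆ cube d ∧
      (P.card : ℝ) ≤ Real.log (4 * δ * 𝒩.ncard) / δ ∧
      pdisp (↑P : Set (Fin d → ℝ)) ≤ ε := by
  classical
  set F : Finset (Set (Fin d → ℝ)) := hfin.toFinset with hF
  have hFmem : ∀ A, A ∈ F ↔ A ∈ 𝒩 := fun A => hfin.mem_toFinset
  set n : ℕ := 𝒩.ncard with hndef
  have hFcard : F.card = n := by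
    rw [hndef, ← hfin.coe_toFinset, Set.ncard_coe_finset]
  have he : (0:ℝ) < Real.exp 1 := Real.exp_pos 1
  have hδn : (0:ℝ) < δ * n := lt_of_lt_of_le he hcard
  have hnpos : (0:ℝ) < n := by
    by_contra h
    push_neg at h
    nlinarith
  have hlog1 : 1 ≤ Real.log (δ * n) := by
    rw [Real.le_log_iff_exp_le hδn]
    exact hcard
  -- the subfamily of sets of volume at least δ
  set F' : Finset (Set (Fin d → ℝ)) := F.filter (fun A => δ ≤ vol A) with hF'
  have hF'hyp : ∀ A ∈ F', MeasurableSet A ∧ A ⊆ cube d ∧ ENNReal.ofReal δ ≤ volume A := by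
    intro A hA
    rw [hF', Finset.mem_filter] at hA
    have hbox : IsPeriodicBox A := happ.1 A ((hFmem A).mp hA.1)
    have hsub : A ⊆ cube d := periodicBox_subset_cube hbox
    have hlt : volume A < ⊤ := by
      refine lt_of_le_of_lt (measure_mono hsub) ?_
      rw [volume_cube]; exact ENNReal.one_lt_top
    refine ⟨periodicBox_measurable hbox, hsub, ?_⟩
    have : ENNReal.ofReal δ ≤ ENNReal.ofReal (vol A) := ENNReal.ofReal_le_ofReal hA.2
    rwa [vol, ENNReal.ofReal_toReal hlt.ne] at this
  set m : ℕ := ⌈Real.log (δ * n) / δ⌉₊ with hm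
  obtain ⟨P₁, hP₁cube, hP₁card, hUbound⟩ :=
    greedy δ hδ (by linarith) m F' hF'hyp
  set U : Finset (Set (Fin d → ℝ)) := F'.filter (fun A => ∀ x ∈ P₁, x ∉ A) with hU
  -- bound on the number of unpierced sets
  have hUcard : (U.card : ℝ) ≤ 1 / δ := by
    have h1 : (U.card : ℝ) ≤ (1-δ)^m * n := by
      refine le_trans hUbound ?_
      have : (F'.card : ℝ) ≤ n := by
        rw [← hFcard]
        exact_mod_cast Finset.card_le_card (Finset.filter_subset _ _)
      have hpownn : (0:ℝ) ≤ (1-δ)^m := pow_nonneg (by linarith) m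
      nlinarith
    have h2 : (1-δ:ℝ)^m ≤ Real.exp (-(δ * m)) := by
      calc (1-δ:ℝ)^m ≤ (Real.exp (-δ))^m := by
            refine pow_le_pow_left₀ (by linarith) ?_ m
            have := Real.add_one_le_exp (-δ)
            linarith
        _ = Real.exp (-(δ * m)) := by
            rw [← Real.exp_nat_mul]
            ring_nf
    have h3 : Real.log (δ * n) ≤ δ * m := by
      have : Real.log (δ * n) / δ ≤ (m:ℝ) := Nat.le_ceil _
      calc Real.log (δ * n) = δ * (Real.log (δ * n) / δ) := by
            field_simp
        _ ≤ δ * m := by nlinarith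
    have h4 : Real.exp (-(δ * m)) ≤ (δ * n)⁻¹ := by
      rw [Real.exp_neg]
      rw [inv_le_inv₀ (Real.exp_pos _) hδn]
      calc δ * n = Real.exp (Real.log (δ * n)) := (Real.exp_log hδn).symm
        _ ≤ Real.exp (δ * m) := Real.exp_le_exp.mpr h3
    calc (U.card : ℝ) ≤ (1-δ)^m * n := h1
      _ ≤ (δ * n)⁻¹ * n := by
          have : (1-δ:ℝ)^m ≤ (δ * n)⁻¹ := le_trans h2 h4
          nlinarith
      _ = 1 / δ := by field_simp [mul_comm]
  -- choice of a point in each unpierced set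
  set f : Set (Fin d → ℝ) → (Fin d → ℝ) :=
    fun A => if h : A.Nonempty then h.some else fun _ => 0 with hf
  have hfmem : ∀ A ∈ U, f A ∈ A := by
    intro A hA
    have hA' : A ∈ F' := Finset.mem_filter.mp hA |>.1
    have hvol : ENNReal.ofReal δ ≤ volume A := (hF'hyp A hA').2.2
    have hvpos : (0:ℝ≥0∞) < volume A := lt_of_lt_of_le (ENNReal.ofReal_pos.mpr hδ) hvol
    have hne : A.Nonempty := nonempty_of_measure_ne_zero hvpos.ne'
    rw [hf]
    simp only [hne, dif_pos]
    exact hne.some_mem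
  set P : Finset (Fin d → ℝ) := P₁ ∪ U.image f with hP
  have hPmem : ∀ x, x ∈ P ↔ x ∈ P₁ ∨ ∃ A ∈ U, f A = x := by
    intro x
    rw [hP, Finset.mem_union, Finset.mem_image]
  refine ⟨P, ?_, ?_, ?_⟩
  · -- P ⊆ cube d
    intro x hx
    rcases (hPmem x).mp hx with hx | ⟨A, hA, rfl⟩
    · exact hP₁cube hx
    · have hA' : A ∈ F' := Finset.mem_filter.mp hA |>.1
      exact (hF'hyp A hA').2.1 (hfmem A hA)
  · -- cardinality bound
    have hcardP : (P.card : ℝ) ≤ (m : ℝ) + U.card := by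
      have h1 : P.card ≤ P₁.card + (U.image f).card := Finset.card_union_le _ _
      have h2 : (U.image f).card ≤ U.card := Finset.card_image_le
      have := le_trans h1 (by omega : P₁.card + (U.image f).card ≤ m + U.card)
      exact_mod_cast this
    have hmle : (m : ℝ) ≤ Real.log (δ * n) / δ + 1 := by
      have := Nat.ceil_lt_add_one
        (by positivity : (0:ℝ) ≤ Real.log (δ * n) / δ)
      exact le_of_lt (by rw [hm]; exact_mod_cast this)
    have hlog4 : Real.log (4 * δ * n) = Real.log 4 + Real.log (δ * n) := by
      rw [mul_assoc, Real.log_mul (by norm_num) (ne_of_gt hδn)]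
    have hlog2 : (0.6931471803 : ℝ) < Real.log 2 := Real.log_two_gt_d9
    have hlog4' : Real.log 4 = 2 * Real.log 2 := by
      rw [show (4:ℝ) = 2^2 by norm_num, Real.log_pow]
      push_cast; ring
    have key : Real.log (δ * n) / δ + 1 + 1 / δ ≤ Real.log (4 * δ * n) / δ := by
      rw [hlog4, hlog4']
      have hfrac : (2 * Real.log 2 + Real.log (δ * n)) / δ
          = Real.log (δ * n) / δ + (2 * Real.log 2) / δ := by ring
      rw [hfrac]
      have hkey2 : (1 + 1 / δ) * δ ≤ 2 * Real.log 2 := by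
        have heq : (1 + 1 / δ) * δ = δ + 1 := by field_simp
        rw [heq]; linarith
      have := (le_div_iff₀ hδ).mpr hkey2
      linarith
    calc (P.card : ℝ) ≤ (m : ℝ) + U.card := hcardP
      _ ≤ (Real.log (δ * n) / δ + 1) + 1 / δ := by linarith
      _ ≤ Real.log (4 * δ * n) / δ := by linarith
  · -- dispersion bound
    refine Real.sSup_le ?_ (le_trans hδ.le hδε)
    rintro v ⟨B, hB, hBP, rfl⟩
    by_contra hv
    push_neg at hv
    obtain ⟨B₀, hB₀N, hB₀sub, hδB₀⟩ := happ.2 B hB hv.le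
    have hB₀F' : B₀ ∈ F' := by
      rw [hF', Finset.mem_filter]
      exact ⟨(hFmem B₀).mpr hB₀N, hδB₀⟩
    have hpierce : ∃ p ∈ P, p ∈ B₀ := by
      by_cases hU' : B₀ ∈ U
      · exact ⟨f B₀, (hPmem _).mpr (Or.inr ⟨B₀, hU', rfl⟩), hfmem B₀ hU'⟩
      · rw [hU, Finset.mem_filter, not_and] at hU'
        have := hU' hB₀F'
        push_neg at this
        obtain ⟨x, hx, hxB₀⟩ := this
        exact ⟨x, (hPmem x).mpr (Or.inl hx), hxB₀⟩
    obtain ⟨p, hpP, hpB₀⟩ := hpierce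
    have : p ∈ B ∩ (↑P : Set (Fin d → ℝ)) := ⟨hB₀sub hpB₀, hpP⟩
    rw [hBP] at this
    exact this
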